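/- Let n ≥ 2 be even, let λ_1,…,λ_n, μ_1,…,μ_n ∈ ℝ, and let v_1,…,v_n, w_1,…,w_n ∈ ℝ^n be arbitrary vectors (not necessarily orthonormal). Let T = Σ_{i=1}^n λ_i v_i^{⊗3} and S = Σ_{j=1}^n μ_j w_j^{⊗3}, and let P be their contraction along the third modes, P_{abcd} = Σ_{s=1}^n T_{abs} S_{cds}. Then h_n(P) = 0. In other words, for even n the polynomial h_n vanishes on every tensor train of length 2 whose two node tensors are symmetric order-3 tensors in S³(ℝ^n) of symmetric rank at most n, regardless of orthogonal decomposability. -/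

import Mathlib

/-!
Expanding the contraction, `h_n(P)` becomes a signed sum over `(k, σ, γ, s)` of
`∏ t, T (k t) (σ t) (s t) * S (k (t - 1)) (γ t) (s t)`. As `T` and `S` are symmetric in their
outer slots, exchanging `k` and `s` while reading both backwards (`t ↦ -t`), and precomposing
`σ` with `t ↦ -t` and `γ` with `t ↦ 1 - t`, is a fixed-point-free involution of the index set
that preserves the product. The two reflections differ by the cycle `t ↦ t + 1`, which is odd
when `n` is even, so the sign flips and the terms cancel in pairs.
-/

open Finset Equiv

variable {R : Type*} [CommRing R] {n : ℕ}

/-- The paper's `h_n`; `t - 1` is cyclic in `Fin n`, which encodes `k₀ = kₙ`. -/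
def hPoly [NeZero n] (P : Fin n → Fin n → Fin n → Fin n → R) : R :=
  ∑ k : Fin n → Fin n, ∑ σ : Perm (Fin n), ∑ γ : Perm (Fin n),
    ((Perm.sign σ : ℤ) : R) * ((Perm.sign γ : ℤ) : R) *
      ∏ t, P (k t) (σ t) (k (t - 1)) (γ t)

def contractThird (T S : Fin n → Fin n → Fin n → R) (a b c d : Fin n) : R :=
  ∑ s, T a b s * S c d s

def hPolyContractTerm [NeZero n] (T S : Fin n → Fin n → Fin n → R) (k : Fin n → Fin n)
    (σ γ : Perm (Fin n)) (s : Fin n → Fin n) : R :=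
  ((Perm.sign σ : ℤ) : R) * ((Perm.sign γ : ℤ) : R) *
    ∏ t, T (k t) (σ t) (s t) * S (k (t - 1)) (γ t) (s t)

theorem Fin.sign_addRight_one [NeZero n] (hn : Even n) :
    Perm.sign (Equiv.addRight (1 : Fin n)) = -1 := by
  have : Equiv.addRight (1 : Fin n) = finRotate n := Equiv.ext fun i => (finRotate_apply i).symm
  rw [this, sign_finRotate]
  exact (Nat.Even.sub_odd NeZero.one_le hn odd_one).neg_one_pow

theorem Fin.sign_neg_mul_sign_subLeft_one [NeZero n] (hn : Even n) :
    Perm.sign (Equiv.neg (Fin n)) * Perm.sign (Equiv.subLeft (1 : Fin n)) = -1 := by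
  have : Equiv.subLeft (1 : Fin n) = Equiv.addRight 1 * Equiv.neg (Fin n) :=
    Equiv.ext fun t => (neg_add_eq_sub t 1).symm
  rw [this, map_mul, mul_left_comm, Int.units_mul_self, mul_one, Fin.sign_addRight_one hn]

theorem hPolyContractTerm_reflect [NeZero n] (hn : Even n) {T S : Fin n → Fin n → Fin n → R}
    (hT : ∀ a b c, T a b c = T c b a) (hS : ∀ a b c, S a b c = S c b a)
    (k : Fin n → Fin n) (σ γ : Perm (Fin n)) (s : Fin n → Fin n) :
    hPolyContractTerm T S (fun t => s (-t)) (σ * Equiv.neg _) (γ * Equiv.subLeft 1)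
        (fun t => k (-t)) = -hPolyContractTerm T S k σ γ s := by
  have hTprod : ∏ t, T (s (-t)) (σ (-t)) (k (-t)) = ∏ t, T (k t) (σ t) (s t) :=
    Fintype.prod_equiv (Equiv.neg _) _ _ fun t => hT _ _ _
  have hSprod :
      ∏ t, S (s (-(t - 1))) (γ (1 - t)) (k (-t)) = ∏ t, S (k (t - 1)) (γ t) (s t) :=
    Fintype.prod_equiv (Equiv.subLeft 1) _ _ fun t => by
      rw [hS, neg_sub, Equiv.subLeft_apply, sub_sub_cancel_left]
  have hsign :
      ((Perm.sign (σ * Equiv.neg _) : ℤ) : R) * ((Perm.sign (γ * Equiv.subLeft 1) : ℤ) : R) =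
        -(((Perm.sign σ : ℤ) : R) * ((Perm.sign γ : ℤ) : R)) := by
    have := congrArg (fun u : ℤˣ => ((u : ℤ) : R))
      (Fin.sign_neg_mul_sign_subLeft_one (n := n) hn)
    simp only [map_mul, Units.val_mul, Int.cast_mul, Units.val_neg, Units.val_one, Int.cast_neg,
      Int.cast_one] at this ⊢
    linear_combination (((Perm.sign σ : ℤ) : R) * ((Perm.sign γ : ℤ) : R)) * this
  simp only [hPolyContractTerm, prod_mul_distrib, Perm.mul_apply, Equiv.neg_apply,
    Equiv.subLeft_apply]
  rw [hsign, hTprod, hSprod]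
  ring

theorem sum_hPolyContractTerm_eq_zero [NeZero n] (hn : Even n)
    {T S : Fin n → Fin n → Fin n → R}
    (hT : ∀ a b c, T a b c = T c b a) (hS : ∀ a b c, S a b c = S c b a) :
    ∑ x : (Fin n → Fin n) × Perm (Fin n) × Perm (Fin n) × (Fin n → Fin n),
      hPolyContractTerm T S x.1 x.2.1 x.2.2.1 x.2.2.2 = 0 := by
  have hsub : Equiv.subLeft (1 : Fin n) ≠ 1 := fun h => by
    have h0 := congrArg (· 0) h
    simp only [Equiv.subLeft_apply, sub_zero, Perm.one_apply, Fin.one_eq_zero_iff] at h0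
    exact Nat.not_even_one (h0 ▸ hn)
  refine sum_ninvolution
    (fun x => (fun t => x.2.2.2 (-t), x.2.1 * Equiv.neg _, x.2.2.1 * Equiv.subLeft 1,
      fun t => x.1 (-t)))
    (fun x => by rw [hPolyContractTerm_reflect hn hT hS, add_neg_cancel])
    (fun x _ h => hsub (mul_eq_left.mp (congrArg (·.2.2.1) h)))
    (fun _ => mem_univ _)
    (fun x => ?_)
  ext <;> simp [mul_assoc]

theorem hPoly_contractThird_eq_zero [NeZero n] (hn : Even n) {T S : Fin n → Fin n → Fin n → R}
    (hT : ∀ a b c, T a b c = T c b a) (hS : ∀ a b c, S a b c = S c b a) :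
    hPoly (contractThird T S) = 0 := by
  rw [← sum_hPolyContractTerm_eq_zero hn hT hS]
  simp only [hPoly, contractThird, hPolyContractTerm, Fintype.prod_sum, mul_sum,
    Fintype.sum_prod_type]

/-- For even `n ≥ 2`, the polynomial `hₙ` vanishes on every length-2 tensor train whose two
node tensors are symmetric order-3 tensors of symmetric rank at most `n`, i.e. on every
contraction `P a b c d = ∑ s, T a b s * S c d s` with `T = ∑ i, λ i • (v i)^{⊗3}` and
`S = ∑ j, μ j • (w j)^{⊗3}` for arbitrary (not necessarily orthonormal) vectors `v i, w j`.
The product over `t : Fin n` of `P (k t) (σ t) (k (t-1)) (γ t)` uses cyclic `Fin n`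
subtraction, encoding the convention `k₀ = kₙ`. -/
theorem hn_vanishes_for_even_n_without_orthogonality
    (n : ℕ) (hn : 2 ≤ n) (heven : Even n)
    (lam mu : Fin n → ℝ) (v w : Fin n → Fin n → ℝ)
    (T S : Fin n → Fin n → Fin n → ℝ)
    (hT : ∀ a b c, T a b c = ∑ i, lam i * (v i a * v i b * v i c))
    (hS : ∀ a b c, S a b c = ∑ j, mu j * (w j a * w j b * w j c))
    (P : Fin n → Fin n → Fin n → Fin n → ℝ)
    (hP : ∀ a b c d, P a b c d = ∑ s, T a b s * S c d s) :
    ∑ k : Fin n → Fin n, ∑ σ : Equiv.Perm (Fin n), ∑ γ : Equiv.Perm (Fin n),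
      ((Equiv.Perm.sign σ : ℤ) : ℝ) * ((Equiv.Perm.sign γ : ℤ) : ℝ) *
        ∏ t : Fin n, P (k t) (σ t) (k (t - ⟨1, by omega⟩)) (γ t) = 0 := by
  have : NeZero n := ⟨by omega⟩
  have hone : (⟨1, by omega⟩ : Fin n) = 1 := Fin.ext (Nat.mod_eq_of_lt hn).symm
  have hTsymm : ∀ a b c, T a b c = T c b a := fun a b c => by
    simp only [hT]
    exact sum_congr rfl fun i _ => by ring
  have hSsymm : ∀ a b c, S a b c = S c b a := fun a b c => by
    simp only [hS]
    exact sum_congr rfl fun j _ => by ring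
  have hPT : P = contractThird T S := by funext a b c d; exact hP a b c d
  simp only [hone]
  change hPoly P = 0
  rw [hPT]
  exact hPoly_contractThird_eq_zero heven hTsymm hSsymm
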